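/- Let P be a finite set of propositional formulas over a finite signature L and let M ⊆ L. Then M is a minimal model of P if and only if M is a model of P and P ∪ { ¬x | x ∈ L \ M } ⊨ ⋀_{x ∈ M} x. -/
import Mathlib

inductive PForm (α : Type) where
  | atom : α → PForm α
  | tru : PForm α
  | fls : PForm α
  | neg : PForm α → PForm α
  | conj : PForm α → PForm α → PForm α
  | disj : PForm α → PForm α → PForm α
  | impl : PForm α → PForm α → PForm α
deriving DecidableEq

def PForm.eval {α : Type} (M : Set α) : PForm α → Prop
  | .atom a => a ∈ M
  | .tru => True
  | .fls => False
  | .neg φ => ¬ PForm.eval M φ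
  | .conj φ ψ => PForm.eval M φ ∧ PForm.eval M ψ
  | .disj φ ψ => PForm.eval M φ ∨ PForm.eval M ψ
  | .impl φ ψ => PForm.eval M φ → PForm.eval M ψ

def PForm.subst {α β : Type} (σ : α → PForm β) : PForm α → PForm β
  | .atom a => σ a
  | .tru => .tru
  | .fls => .fls
  | .neg φ => .neg (PForm.subst σ φ)
  | .conj φ ψ => .conj (PForm.subst σ φ) (PForm.subst σ ψ)
  | .disj φ ψ => .disj (PForm.subst σ φ) (PForm.subst σ ψ)
  | .impl φ ψ => .impl (PForm.subst σ φ) (PForm.subst σ ψ)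

def ModelOf {α : Type} (M : Set α) (T : Set (PForm α)) : Prop := ∀ φ ∈ T, PForm.eval M φ

def MinimalModel {α : Type} (M : Set α) (T : Set (PForm α)) : Prop :=
  ModelOf M T ∧ ∀ M', ModelOf M' T → M' ⊆ M → M' = M

def MaximalModel {α : Type} (M : Set α) (T : Set (PForm α)) : Prop :=
  ModelOf M T ∧ ∀ M', ModelOf M' T → M ⊆ M' → M' = M

noncomputable def bigConj {ι α : Type} (s : Finset ι) (f : ι → PForm α) : PForm α :=
  (s.toList.map f).foldr PForm.conj PForm.tru

noncomputable def bigDisj {ι α : Type} (s : Finset ι) (f : ι → PForm α) : PForm α :=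
  (s.toList.map f).foldr PForm.disj PForm.fls

lemma eval_foldr_conj {α : Type} (N : Set α) (l : List α) :
    PForm.eval N ((l.map PForm.atom).foldr PForm.conj PForm.tru) ↔ ∀ x ∈ l, x ∈ N := by
  induction l with
  | nil => simp [PForm.eval]
  | cons a l ih => simp [PForm.eval, ih]

lemma eval_bigConj_atom {α : Type} (N : Set α) (s : Finset α) :
    PForm.eval N (bigConj s PForm.atom) ↔ ∀ x ∈ s, x ∈ N := by
  rw [bigConj, eval_foldr_conj]
  simp

theorem stmt5 {α : Type} [Fintype α] [DecidableEq α] (T : Set (PForm α)) (hT : T.Finite)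
    (M : Finset α) :
    MinimalModel (↑M) T ↔
      (ModelOf (↑M) T ∧
        ∀ N : Set α,
          ModelOf N (T ∪ { φ | ∃ x, x ∉ M ∧ φ = PForm.neg (PForm.atom x) }) →
            PForm.eval N (bigConj M PForm.atom)) := by
  constructor
  · rintro ⟨hM, hmin⟩
    refine ⟨hM, fun N hN => ?_⟩
    have hNT : ModelOf N T := fun φ hφ => hN φ (Or.inl hφ)
    have hsub : N ⊆ ↑M := by
      intro x hx
      by_contra hxM
      exact hN (PForm.neg (PForm.atom x)) (Or.inr ⟨x, hxM, rfl⟩) hx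
    have := hmin N hNT hsub
    rw [eval_bigConj_atom]
    intro x hxM
    rw [this]
    exact hxM
  · rintro ⟨hM, h⟩
    refine ⟨hM, fun M' hM' hsub => ?_⟩
    have : ModelOf M' (T ∪ { φ | ∃ x, x ∉ M ∧ φ = PForm.neg (PForm.atom x) }) := by
      rintro φ (hφ | ⟨x, hxM, rfl⟩)
      · exact hM' φ hφ
      · intro hx
        exact hxM (hsub hx)
    have h2 := (eval_bigConj_atom M' M).mp (h M' this)
    apply Set.Subset.antisymm hsub
    intro x hx
    exact h2 x hx
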